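/- arXiv:2201.08433 — 2 statements merged into one kernel-verified Lean document; each statement's English description precedes it below -/
import Mathlib

section
/- Let (X,d) be a complete metric space and let f_1,...,f_N : X → X be contraction mappings. Then there exists a unique non-empty compact set K ⊆ X such that K = f_1(K) ∪ f_2(K) ∪ ... ∪ f_N(K). -/
/-! The Hutchinson operator `K ↦ ⋃ i, f i '' K` is a contraction of the space of nonempty compact
subsets of `X` with the Hausdorff metric, with constant the largest Lipschitz constant of the
`f i`. That space is complete because `X` is, and the invariant sets in question are exactly the
fixed points of the operator, so the Banach fixed point theorem gives existence and uniqueness. -/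

open Set Metric TopologicalSpace

namespace LipschitzWith

variable {α β : Type*} [PseudoEMetricSpace α] [PseudoEMetricSpace β] {c : NNReal} {g : α → β}

theorem infEDist_image_le (hg : LipschitzWith c g) (x : α) {t : Set α} (ht : t.Nonempty) :
    infEDist (g x) (g '' t) ≤ c * infEDist x t := by
  have : Nonempty t := ht.to_subtype
  calc infEDist (g x) (g '' t)
      ≤ ⨅ y : t, c * edist x y := le_iInf fun y ↦
        (infEDist_le_edist_of_mem (mem_image_of_mem g y.2)).trans (hg.edist_le_mul x y)
    _ = c * infEDist x t := by rw [infEDist, iInf_subtype', ENNReal.mul_iInf (by simp)]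

theorem hausdorffEDist_image_le (hg : LipschitzWith c g) {s t : Set α} (hs : s.Nonempty)
    (ht : t.Nonempty) : hausdorffEDist (g '' s) (g '' t) ≤ c * hausdorffEDist s t := by
  refine hausdorffEDist_le_of_infEDist ?_ ?_
  · rintro _ ⟨x, hx, rfl⟩
    exact (hg.infEDist_image_le x ht).trans (by gcongr; exact infEDist_le_hausdorffEDist_of_mem hx)
  · rintro _ ⟨x, hx, rfl⟩
    rw [hausdorffEDist_comm]
    exact (hg.infEDist_image_le x hs).trans (by gcongr; exact infEDist_le_hausdorffEDist_of_mem hx)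

end LipschitzWith

theorem exists_lipschitzWith_lt_one_of_finite {ι α β : Type*} [Finite ι] [PseudoEMetricSpace α]
    [PseudoEMetricSpace β] {f : ι → α → β} (hf : ∀ i, ∃ c : NNReal, c < 1 ∧ LipschitzWith c (f i)) :
    ∃ C : NNReal, C < 1 ∧ ∀ i, LipschitzWith C (f i) := by
  have := Fintype.ofFinite ι
  choose c hc hcf using hf
  exact ⟨Finset.univ.sup c, (Finset.sup_lt_iff zero_lt_one).2 fun i _ ↦ hc i,
    fun i ↦ (hcf i).weaken (Finset.le_sup (Finset.mem_univ i))⟩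

namespace TopologicalSpace.NonemptyCompacts

variable {ι α : Type*} [Finite ι] [Nonempty ι]

def hutchinson [TopologicalSpace α] (f : ι → α → α) (hf : ∀ i, Continuous (f i))
    (K : NonemptyCompacts α) : NonemptyCompacts α :=
  ⟨⟨⋃ i, f i '' K, isCompact_iUnion fun i ↦ K.isCompact.image (hf i)⟩,
    (K.nonempty.image _).mono (subset_iUnion _ (Classical.arbitrary ι))⟩

theorem lipschitzWith_hutchinson [EMetricSpace α] {c : NNReal} {f : ι → α → α}
    (hf : ∀ i, LipschitzWith c (f i)) :
    LipschitzWith c (hutchinson f fun i ↦ (hf i).continuous) := fun K L ↦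
  hausdorffEDist_iUnion_le.trans <|
    iSup_le fun i ↦ (hf i).hausdorffEDist_image_le K.nonempty L.nonempty

end TopologicalSpace.NonemptyCompacts

open TopologicalSpace.NonemptyCompacts in
/-- Hutchinson's theorem: a finite family of contractions on a complete
metric space has a unique nonempty compact invariant set (the attractor). -/
theorem stmt_0 {X : Type*} [MetricSpace X] [CompleteSpace X] [Nonempty X]
    (N : ℕ) (hN : 0 < N) (f : Fin N → X → X)
    (hf : ∀ i, ∃ c : NNReal, c < 1 ∧ LipschitzWith c (f i)) :
    ∃! K : Set X, K.Nonempty ∧ IsCompact K ∧ K = ⋃ i, f i '' K := by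
  have : Nonempty (Fin N) := ⟨⟨0, hN⟩⟩
  obtain ⟨C, hC, hlip⟩ := exists_lipschitzWith_lt_one_of_finite hf
  have hF : ContractingWith C (hutchinson f fun i ↦ (hlip i).continuous) :=
    ⟨hC, lipschitzWith_hutchinson hlip⟩
  refine ⟨hF.fixedPoint, ⟨NonemptyCompacts.nonempty _, NonemptyCompacts.isCompact _,
    congrArg SetLike.coe hF.fixedPoint_isFixedPt.symm⟩, ?_⟩
  rintro K ⟨hne, hK, hinv⟩
  exact congrArg SetLike.coe
    (hF.fixedPoint_unique (x := ⟨⟨K, hK⟩, hne⟩) (NonemptyCompacts.ext hinv.symm))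
end

section
/- Let G be a finite connected simple graph with vertex set V, a nonempty boundary set V_0 ⊊ V, given boundary data h : V_0 → ℝ and forcing g : V \ V_0 → ℝ. Then the discrete Dirichlet problem Δ_G u (x) = g(x) for x ∈ V \ V_0, u(x) = h(x) for x ∈ V_0, has a unique solution u : V → ℝ. -/
/-! Imposing the boundary values on `V₀` and applying `Δ_G` at the interior vertices is a linear
endomorphism of the finite-dimensional space `V → ℝ`, so it suffices to show it is injective. If `u`
lies in its kernel, then `u` vanishes on `V₀` and `Δ_G u` vanishes off `V₀`, so the Dirichlet energy
`⟨u, Δ_G u⟩ = ½ Σ_{x ∼ y} (u x - u y)²` is zero. Hence `u` is constant on the connected graph `G`,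
and that constant is `0` because `V₀` is nonempty. -/

open Matrix

namespace Matrix

variable {V K : Type*} [Fintype V] [DecidableEq V]

def dirichletMap [CommSemiring K] (M : Matrix V V K) (S : Finset V) : (V → K) →ₗ[K] V → K :=
  LinearMap.pi fun x => if x ∈ S then LinearMap.proj x else LinearMap.proj x ∘ₗ M.mulVecLin

section CommSemiring

variable [CommSemiring K] (M : Matrix V V K) (S : Finset V)

theorem dirichletMap_apply (u : V → K) (x : V) :
    M.dirichletMap S u x = if x ∈ S then u x else (M *ᵥ u) x := by
  simp only [dirichletMap, LinearMap.pi_apply]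
  split_ifs <;> rfl

theorem dirichletMap_eq_piecewise_iff (u h g : V → K) :
    M.dirichletMap S u = S.piecewise h g ↔
      (∀ x ∉ S, (M *ᵥ u) x = g x) ∧ ∀ x ∈ S, u x = h x := by
  simp only [funext_iff, dirichletMap_apply, Finset.piecewise]
  constructor
  · intro hu
    exact ⟨fun x hx => by simpa [hx] using hu x, fun x hx => by simpa [hx] using hu x⟩
  · rintro ⟨hint, hbdry⟩ x
    by_cases hx : x ∈ S
    · simp [hx, hbdry x hx]
    · simp [hx, hint x hx]

end CommSemiring

theorem existsUnique_dirichlet_of_injective [Field K] {M : Matrix V V K} {S : Finset V}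
    (hinj : Function.Injective (M.dirichletMap S)) (h g : V → K) :
    ∃! u : V → K, (∀ x ∉ S, (M *ᵥ u) x = g x) ∧ ∀ x ∈ S, u x = h x := by
  have hbij : Function.Bijective (M.dirichletMap S) :=
    ⟨hinj, LinearMap.injective_iff_surjective.mp hinj⟩
  simpa only [dirichletMap_eq_piecewise_iff] using hbij.existsUnique (S.piecewise h g)

end Matrix

namespace SimpleGraph

variable {V : Type*} [Fintype V] [DecidableEq V] {G : SimpleGraph V} [DecidableRel G.Adj]

theorem injective_dirichletMap_lapMatrix (hG : G.Connected) {S : Finset V} (hS : S.Nonempty) :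
    Function.Injective ((G.lapMatrix ℝ).dirichletMap S) := by
  refine (injective_iff_map_eq_zero _).mpr fun u hu => ?_
  obtain ⟨hint, hbdry⟩ :=
    (dirichletMap_eq_piecewise_iff _ S u 0 0).mp (by rwa [Finset.piecewise_same])
  have henergy : toLinearMap₂' ℝ (G.lapMatrix ℝ) u u = 0 := by
    rw [toLinearMap₂'_apply', dotProduct]
    refine Finset.sum_eq_zero fun x _ => ?_
    by_cases hx : x ∈ S
    · simp [hbdry x hx]
    · simp [hint x hx]
  have hconst := (G.lapMatrix_toLinearMap₂'_apply'_eq_zero_iff_forall_reachable u).mp henergy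
  obtain ⟨x₀, hx₀⟩ := hS
  funext x
  exact (hconst x x₀ (hG x x₀)).trans (hbdry x₀ hx₀)

end SimpleGraph

theorem stmt_8_general {V : Type*} [Fintype V] [DecidableEq V]
    (G : SimpleGraph V) [DecidableRel G.Adj] (hG : G.Connected)
    (V₀ : Finset V) (hV₀ : V₀.Nonempty)
    (L : Matrix V V ℝ) (hL : L = G.degMatrix ℝ - G.adjMatrix ℝ)
    (h g : V → ℝ) :
    ∃! u : V → ℝ,
      (∀ x ∉ V₀, (L *ᵥ u) x = g x) ∧ (∀ x ∈ V₀, u x = h x) := by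
  subst hL
  exact existsUnique_dirichlet_of_injective (G.injective_dirichletMap_lapMatrix hG hV₀) h g

/-- The discrete Dirichlet problem on a finite connected graph with nonempty
boundary `V₀` has a unique solution: `Δ_G u = g` on interior vertices and
`u = h` on boundary vertices. -/
theorem stmt_8 {V : Type*} [Fintype V] [DecidableEq V]
    (G : SimpleGraph V) [DecidableRel G.Adj] (hG : G.Connected)
    (V₀ : Finset V) (hV₀ : V₀.Nonempty) (hV₀' : ↑V₀ ⊂ (Set.univ : Set V))
    (L : Matrix V V ℝ) (hL : L = G.degMatrix ℝ - G.adjMatrix ℝ)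
    (h g : V → ℝ) :
    ∃! u : V → ℝ,
      (∀ x ∉ V₀, (L *ᵥ u) x = g x) ∧ (∀ x ∈ V₀, u x = h x) :=
  stmt_8_general G hG V₀ hV₀ L hL h g
end
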